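/- Let P : ℝ^d → Matrix (Fin d) (Fin d) ℝ be a smooth skew-symmetric matrix-valued function satisfying the Jacobi identity Σ_ℓ (P^{ℓk} ∂_ℓ P^{ij} + P^{ℓi} ∂_ℓ P^{jk} + P^{ℓj} ∂_ℓ P^{ki}) = 0 for all i,j,k. With B₀, B₁, B₂ as in the Kontsevich star-product expansion to second order (B₀(f,g)=fg, B₁(f,g)=ΣP^{ij}∂_if∂_jg, B₂ the order-ħ² Kontsevich term with coefficients 1/2, 1/3, -1/3, -1/6), the ħ²-coefficient of the associator vanishes: B₂(fg,h) + B₁(B₁(f,g),h) + B₂(f,g)·h - B₂(f,gh) - B₁(f,B₁(g,h)) - f·B₂(g,h) = 0 for all smooth f, g, h. -/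

import Mathlib

/-- The `i`-th partial derivative of a function on `ℝ^d`. -/
noncomputable def pd {d : ℕ} (i : Fin d) (f : (Fin d → ℝ) → ℝ) : (Fin d → ℝ) → ℝ :=
  fun x => fderiv ℝ f x (Pi.single i 1)

/-- Order-ħ¹ term of the Kontsevich star-product: `B₁(f,g) = Σ P^{ij} ∂_i f ∂_j g`. -/
noncomputable def B1 {d : ℕ} (P : (Fin d → ℝ) → Matrix (Fin d) (Fin d) ℝ)
    (f g : (Fin d → ℝ) → ℝ) : (Fin d → ℝ) → ℝ :=
  fun x => ∑ i, ∑ j, P x i j * pd i f x * pd j g x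

/-- Order-ħ² term of the Kontsevich star-product, with coefficients
`1/2, 1/3, -1/3, -1/6`. -/
noncomputable def B2 {d : ℕ} (P : (Fin d → ℝ) → Matrix (Fin d) (Fin d) ℝ)
    (f g : (Fin d → ℝ) → ℝ) : (Fin d → ℝ) → ℝ := fun x =>
  (1 / 2) * (∑ i, ∑ j, ∑ k, ∑ l,
      P x i j * P x k l * pd k (pd i f) x * pd l (pd j g) x)
  + (1 / 3) * (∑ i, ∑ j, ∑ k, ∑ l,
      pd l (fun y => P y i j) x * P x k l * pd k (pd i f) x * pd j g x)
  - (1 / 3) * (∑ i, ∑ j, ∑ k, ∑ l,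
      pd l (fun y => P y i j) x * P x k l * pd i f x * pd k (pd j g) x)
  - (1 / 6) * (∑ i, ∑ j, ∑ k, ∑ l,
      pd l (fun y => P y i j) x * pd j (fun y => P y k l) x * pd i f x * pd k g x)

/-! ### Auxiliary analytic lemmas -/

section Aux

variable {d : ℕ}

lemma smooth_diff {u : (Fin d → ℝ) → ℝ} (h : ContDiff ℝ (⊤ : ℕ∞) u) :
    Differentiable ℝ u := h.differentiable (by simp)

lemma contDiff_pd (i : Fin d) {f : (Fin d → ℝ) → ℝ} (hf : ContDiff ℝ (⊤ : ℕ∞) f) :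
    ContDiff ℝ (⊤ : ℕ∞) (pd i f) := by
  have h1 : ContDiff ℝ (⊤ : ℕ∞) (fderiv ℝ f) := (contDiff_infty_iff_fderiv.mp hf).2
  exact (ContinuousLinearMap.apply ℝ ℝ (Pi.single i 1)).contDiff.comp h1

lemma pd_add {f g : (Fin d → ℝ) → ℝ} {x : Fin d → ℝ} (i : Fin d)
    (hf : DifferentiableAt ℝ f x) (hg : DifferentiableAt ℝ g x) :
    pd i (fun y => f y + g y) x = pd i f x + pd i g x := by
  simp [pd, fderiv_fun_add hf hg]

lemma pd_mul {f g : (Fin d → ℝ) → ℝ} {x : Fin d → ℝ} (i : Fin d)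
    (hf : DifferentiableAt ℝ f x) (hg : DifferentiableAt ℝ g x) :
    pd i (fun y => f y * g y) x = pd i f x * g x + f x * pd i g x := by
  simp [pd, fderiv_fun_mul hf hg]; ring

lemma pd_sum {ι : Type*} (s : Finset ι) (F : ι → (Fin d → ℝ) → ℝ) {x : Fin d → ℝ} (i : Fin d)
    (hF : ∀ j ∈ s, DifferentiableAt ℝ (F j) x) :
    pd i (fun y => ∑ j ∈ s, F j y) x = ∑ j ∈ s, pd i (F j) x := by
  simp [pd, fderiv_fun_sum hF]

lemma pd_apply_snd {f : (Fin d → ℝ) → ℝ} (hf : ContDiff ℝ (⊤ : ℕ∞) f)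
    (v : Fin d → ℝ) (x : Fin d → ℝ) (w : Fin d → ℝ) :
    fderiv ℝ (fun y => fderiv ℝ f y v) x w = fderiv ℝ (fderiv ℝ f) x w v := by
  have h2 : ContDiff ℝ (⊤ : ℕ∞) (fderiv ℝ f) := (contDiff_infty_iff_fderiv.mp hf).2
  have hd2 : DifferentiableAt ℝ (fderiv ℝ f) x := (h2.differentiable (by simp)) x
  rw [show (fun y => fderiv ℝ f y v) = fun y => (fderiv ℝ f y) ((fun _ => v) y) from rfl]
  rw [fderiv_clm_apply hd2 (differentiableAt_const v)]
  simp

lemma pd_comm {f : (Fin d → ℝ) → ℝ} (hf : ContDiff ℝ (⊤ : ℕ∞) f) (i k : Fin d) (x : Fin d → ℝ) :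
    pd k (pd i f) x = pd i (pd k f) x := by
  have hsymm : IsSymmSndFDerivAt ℝ f x := by
    apply ContDiffAt.isSymmSndFDerivAt (n := (⊤ : ℕ∞)) hf.contDiffAt
    exact le_trans (by norm_num) (WithTop.coe_le_coe.mpr (le_top : (2:ℕ∞) ≤ ⊤))
  show fderiv ℝ (fun y => fderiv ℝ f y (Pi.single i 1)) x (Pi.single k 1)
      = fderiv ℝ (fun y => fderiv ℝ f y (Pi.single k 1)) x (Pi.single i 1)
  rw [pd_apply_snd hf, pd_apply_snd hf]
  exact hsymm.eq _ _

lemma pd_mul3 {a b c : (Fin d → ℝ) → ℝ} {x : Fin d → ℝ} (k : Fin d)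
    (ha : ContDiff ℝ (⊤ : ℕ∞) a) (hb : ContDiff ℝ (⊤ : ℕ∞) b) (hc : ContDiff ℝ (⊤ : ℕ∞) c) :
    pd k (fun y => a y * b y * c y) x
      = pd k a x * b x * c x + a x * pd k b x * c x + a x * b x * pd k c x := by
  rw [pd_mul k ((smooth_diff (ha.mul hb)) x) ((smooth_diff hc) x),
      pd_mul k ((smooth_diff ha) x) ((smooth_diff hb) x)]
  ring

end Aux

/-! ### Sum reindexing helpers -/

section Sums

variable {ι : Type*} [Fintype ι]

lemma sum4_eq_prod (E : ι × ι × ι × ι → ℝ) :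
    ∑ p : ι × ι × ι × ι, E p = ∑ i, ∑ j, ∑ k, ∑ l, E (i, j, k, l) := by
  rw [Fintype.sum_prod_type]
  refine Finset.sum_congr rfl fun i _ => ?_
  rw [Fintype.sum_prod_type]
  refine Finset.sum_congr rfl fun j _ => ?_
  rw [Fintype.sum_prod_type]

lemma sum4_perm (e : ι → ι → ι → ι → ℝ) (σ : (ι × ι × ι × ι) ≃ (ι × ι × ι × ι)) :
    (∑ i, ∑ j, ∑ k, ∑ l, e (σ (i,j,k,l)).1 (σ (i,j,k,l)).2.1 (σ (i,j,k,l)).2.2.1 (σ (i,j,k,l)).2.2.2)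
      = ∑ i, ∑ j, ∑ k, ∑ l, e i j k l := by
  rw [← sum4_eq_prod (fun p => e (σ p).1 (σ p).2.1 (σ p).2.2.1 (σ p).2.2.2),
      ← sum4_eq_prod (fun p => e p.1 p.2.1 p.2.2.1 p.2.2.2)]
  exact Equiv.sum_comp σ (fun p => e p.1 p.2.1 p.2.2.1 p.2.2.2)

lemma sum4_congr (e1 e2 : ι → ι → ι → ι → ℝ) (h : ∀ i j k l, e1 i j k l = e2 i j k l) :
    (∑ i, ∑ j, ∑ k, ∑ l, e1 i j k l) = ∑ i, ∑ j, ∑ k, ∑ l, e2 i j k l :=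
  Finset.sum_congr rfl fun i _ => Finset.sum_congr rfl fun j _ =>
    Finset.sum_congr rfl fun k _ => Finset.sum_congr rfl fun l _ => h i j k l

lemma mul_sum4 (c : ℝ) (e : ι → ι → ι → ι → ℝ) :
    c * (∑ i, ∑ j, ∑ k, ∑ l, e i j k l) = ∑ i, ∑ j, ∑ k, ∑ l, c * e i j k l := by
  simp [Finset.mul_sum]

lemma sum4_swap (e : ι → ι → ι → ι → ℝ) :
    (∑ i, ∑ j, ∑ k, ∑ l, e k l i j) = ∑ i, ∑ j, ∑ k, ∑ l, e i j k l :=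
  sum4_perm e ⟨fun p => (p.2.2.1, p.2.2.2, p.1, p.2.1), fun p => (p.2.2.1, p.2.2.2, p.1, p.2.1),
    fun _ => rfl, fun _ => rfl⟩

lemma sum4_kijl (e : ι → ι → ι → ι → ℝ) :
    (∑ i, ∑ j, ∑ k, ∑ l, e k i j l) = ∑ i, ∑ j, ∑ k, ∑ l, e i j k l :=
  sum4_perm e ⟨fun p => (p.2.2.1, p.1, p.2.1, p.2.2.2), fun p => (p.2.1, p.2.2.1, p.1, p.2.2.2),
    fun _ => rfl, fun _ => rfl⟩

lemma sum4_iklj (e : ι → ι → ι → ι → ℝ) :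
    (∑ i, ∑ j, ∑ k, ∑ l, e i k l j) = ∑ i, ∑ j, ∑ k, ∑ l, e i j k l :=
  sum4_perm e ⟨fun p => (p.1, p.2.2.1, p.2.2.2, p.2.1), fun p => (p.1, p.2.2.2, p.2.1, p.2.2.1),
    fun _ => rfl, fun _ => rfl⟩

lemma sum4_ikjl (e : ι → ι → ι → ι → ℝ) :
    (∑ i, ∑ j, ∑ k, ∑ l, e i k j l) = ∑ i, ∑ j, ∑ k, ∑ l, e i j k l :=
  sum4_perm e ⟨fun p => (p.1, p.2.2.1, p.2.1, p.2.2.2), fun p => (p.1, p.2.2.1, p.2.1, p.2.2.2),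
    fun _ => rfl, fun _ => rfl⟩

lemma sum4_klji (e : ι → ι → ι → ι → ℝ) :
    (∑ i, ∑ j, ∑ k, ∑ l, e k l j i) = ∑ i, ∑ j, ∑ k, ∑ l, e i j k l :=
  sum4_perm e ⟨fun p => (p.2.2.1, p.2.2.2, p.2.1, p.1), fun p => (p.2.2.2, p.2.2.1, p.1, p.2.1),
    fun _ => rfl, fun _ => rfl⟩

end Sums
set_option maxHeartbeats 4000000 in
lemma core {d : ℕ} (p : Fin d → Fin d → ℝ) (q : Fin d → Fin d → Fin d → ℝ)
    (F G H : Fin d → ℝ) (F2 G2 H2 : Fin d → Fin d → ℝ) (f0 g0 h0 : ℝ)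
    (hp : ∀ i j, p i j = - p j i)
    (hq : ∀ l i j, q l i j = - q l j i)
    (hF2 : ∀ i j, F2 i j = F2 j i) (hG2 : ∀ i j, G2 i j = G2 j i)
    (hH2 : ∀ i j, H2 i j = H2 j i)
    (hJ : ∀ i j k, ∑ l, (p l k * q l i j + p l i * q l j k + p l j * q l k i) = 0) :
    ((1/2) * (∑ i, ∑ j, ∑ k, ∑ l, p i j * p k l * (F2 k i * g0 + F i * G k + F k * G i + f0 * G2 k i) * H2 l j)
    + (1/3) * (∑ i, ∑ j, ∑ k, ∑ l, q l i j * p k l * (F2 k i * g0 + F i * G k + F k * G i + f0 * G2 k i) * H j)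
    - (1/3) * (∑ i, ∑ j, ∑ k, ∑ l, q l i j * p k l * (F i * g0 + f0 * G i) * H2 k j)
    - (1/6) * (∑ i, ∑ j, ∑ k, ∑ l, q l i j * q j k l * (F i * g0 + f0 * G i) * H k))
    + (∑ k, ∑ l, p k l * (∑ i, ∑ j, (q k i j * F i * G j + p i j * F2 k i * G j + p i j * F i * G2 k j)) * H l)
    + ((1/2) * (∑ i, ∑ j, ∑ k, ∑ l, p i j * p k l * F2 k i * G2 l j)
    + (1/3) * (∑ i, ∑ j, ∑ k, ∑ l, q l i j * p k l * F2 k i * G j)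
    - (1/3) * (∑ i, ∑ j, ∑ k, ∑ l, q l i j * p k l * F i * G2 k j)
    - (1/6) * (∑ i, ∑ j, ∑ k, ∑ l, q l i j * q j k l * F i * G k)) * h0
    - ((1/2) * (∑ i, ∑ j, ∑ k, ∑ l, p i j * p k l * F2 k i * (G2 l j * h0 + G j * H l + G l * H j + g0 * H2 l j))
    + (1/3) * (∑ i, ∑ j, ∑ k, ∑ l, q l i j * p k l * F2 k i * (G j * h0 + g0 * H j))
    - (1/3) * (∑ i, ∑ j, ∑ k, ∑ l, q l i j * p k l * F i * (G2 k j * h0 + G j * H k + G k * H j + g0 * H2 k j))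
    - (1/6) * (∑ i, ∑ j, ∑ k, ∑ l, q l i j * q j k l * F i * (G k * h0 + g0 * H k)))
    - (∑ i, ∑ j, p i j * F i * (∑ k, ∑ l, (q j k l * G k * H l + p k l * G2 j k * H l + p k l * G k * H2 j l)))
    - f0 * ((1/2) * (∑ i, ∑ j, ∑ k, ∑ l, p i j * p k l * G2 k i * H2 l j)
    + (1/3) * (∑ i, ∑ j, ∑ k, ∑ l, q l i j * p k l * G2 k i * H j)
    - (1/3) * (∑ i, ∑ j, ∑ k, ∑ l, q l i j * p k l * G i * H2 k j)
    - (1/6) * (∑ i, ∑ j, ∑ k, ∑ l, q l i j * q j k l * G i * H k)) = 0 := by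
  -- canonical sums
  set K1 : ℝ := ∑ i, ∑ j, ∑ k, ∑ l, p i j * p k l * F2 i k * G l * H j with hK1
  set K2 : ℝ := ∑ i, ∑ j, ∑ k, ∑ l, p i j * p k l * F k * G2 i l * H j with hK2
  have h1 : (∑ i, ∑ j, ∑ k, ∑ l, p i j * p k l * F2 k i * g0 * H2 l j * (1/2))
      = ∑ i, ∑ j, ∑ k, ∑ l, 1/2 * p i j * p k l * F2 k i * g0 * H2 l j :=
    sum4_congr _ _ fun i j k l => by beta_reduce; ring
  have h4 : (∑ i, ∑ j, ∑ k, ∑ l, 1/2 * p i j * p k l * f0 * G2 k i * H2 l j)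
      = ∑ i, ∑ j, ∑ k, ∑ l, f0 * (1/2) * p i j * p k l * G2 k i * H2 l j :=
    sum4_congr _ _ fun i j k l => by beta_reduce; ring
  have h7 : (∑ i, ∑ j, ∑ k, ∑ l, 1/3 * q l i j * p k l * f0 * G2 k i * H j)
      = ∑ i, ∑ j, ∑ k, ∑ l, f0 * (1/3) * q l i j * p k l * G2 k i * H j :=
    sum4_congr _ _ fun i j k l => by beta_reduce; ring
  have h8 : (∑ i, ∑ j, ∑ k, ∑ l, 1/3 * q l i j * p k l * f0 * G i * H2 k j)
      = ∑ i, ∑ j, ∑ k, ∑ l, f0 * (1/3) * q l i j * p k l * G i * H2 k j :=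
    sum4_congr _ _ fun i j k l => by beta_reduce; ring
  have h9 : (∑ i, ∑ j, ∑ k, ∑ l, 1/6 * q l i j * q j k l * f0 * G i * H k)
      = ∑ i, ∑ j, ∑ k, ∑ l, f0 * (1/6) * q l i j * q j k l * G i * H k :=
    sum4_congr _ _ fun i j k l => by beta_reduce; ring
  -- F2-group
  have h13 : (∑ i, ∑ j, ∑ k, ∑ l, 1/2 * p i j * p k l * F2 k i * G j * H l) = 1/2 * K1 := by
    rw [hK1, mul_sum4]
    calc (∑ i, ∑ j, ∑ k, ∑ l, 1/2 * p i j * p k l * F2 k i * G j * H l)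
        = ∑ i, ∑ j, ∑ k, ∑ l, (fun a b c e => 1/2 * (p a b * p c e * F2 a c * G e * H b)) k l i j :=
          sum4_congr _ _ fun i j k l => by beta_reduce; ring
      _ = ∑ i, ∑ j, ∑ k, ∑ l, 1/2 * (p i j * p k l * F2 i k * G l * H j) := sum4_swap _
  have h14 : (∑ i, ∑ j, ∑ k, ∑ l, 1/2 * p i j * p k l * F2 k i * G l * H j) = 1/2 * K1 := by
    rw [hK1, mul_sum4]
    exact sum4_congr _ _ fun i j k l => by rw [hF2 k i]; ring
  -- G2-group
  have h18 : (∑ i, ∑ j, ∑ k, ∑ l, p i j * F i * p k l * G2 j k * H l) = K2 := by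
    rw [hK2]
    calc (∑ i, ∑ j, ∑ k, ∑ l, p i j * F i * p k l * G2 j k * H l)
        = ∑ i, ∑ j, ∑ k, ∑ l, (fun a b c e => p a b * p c e * F c * G2 a e * H b) k l i j :=
          sum4_congr _ _ fun i j k l => by beta_reduce; rw [hG2 j k]; ring
      _ = ∑ i, ∑ j, ∑ k, ∑ l, p i j * p k l * F k * G2 i l * H j := sum4_swap _
  -- H2-group
  set K3 : ℝ := ∑ i, ∑ j, ∑ k, ∑ l, p i j * p k l * F i * G k * H2 l j with hK3
  have h2 : (∑ i, ∑ j, ∑ k, ∑ l, 1/2 * p i j * p k l * F i * G k * H2 l j) = 1/2 * K3 := by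
    rw [hK3, mul_sum4]
    exact sum4_congr _ _ fun i j k l => by beta_reduce; ring
  have h3 : (∑ i, ∑ j, ∑ k, ∑ l, 1/2 * p i j * p k l * F k * G i * H2 l j) = 1/2 * K3 := by
    rw [hK3, mul_sum4]
    calc (∑ i, ∑ j, ∑ k, ∑ l, 1/2 * p i j * p k l * F k * G i * H2 l j)
        = ∑ i, ∑ j, ∑ k, ∑ l, (fun a b c e => 1/2 * (p a b * p c e * F a * G c * H2 e b)) k l i j :=
          sum4_congr _ _ fun i j k l => by beta_reduce; rw [hH2 j l]; ring
      _ = ∑ i, ∑ j, ∑ k, ∑ l, 1/2 * (p i j * p k l * F i * G k * H2 l j) := sum4_swap _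
  have h19 : (∑ i, ∑ j, ∑ k, ∑ l, p i j * F i * p k l * G k * H2 j l) = K3 := by
    rw [hK3]
    exact sum4_congr _ _ fun i j k l => by beta_reduce; rw [hH2 j l]; ring
  -- first-order canonical sums
  set C1 : ℝ := ∑ i, ∑ j, ∑ k, ∑ l, q l j k * p i l * F i * G j * H k with hC1d
  set C2 : ℝ := ∑ i, ∑ j, ∑ k, ∑ l, q l i k * p j l * F i * G j * H k with hC2d
  set C2' : ℝ := ∑ i, ∑ j, ∑ k, ∑ l, q l k i * p j l * F i * G j * H k with hC2'd
  set C3 : ℝ := ∑ i, ∑ j, ∑ k, ∑ l, q l i j * p l k * F i * G j * H k with hC3d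
  set C4 : ℝ := ∑ i, ∑ j, ∑ k, ∑ l, q l i j * p k l * F i * G j * H k with hC4d
  have h6 : (∑ i, ∑ j, ∑ k, ∑ l, 1/3 * q l i j * p k l * F k * G i * H j) = 1/3 * C1 := by
    rw [hC1d, mul_sum4]
    calc (∑ i, ∑ j, ∑ k, ∑ l, 1/3 * q l i j * p k l * F k * G i * H j)
        = ∑ i, ∑ j, ∑ k, ∑ l, (fun a b c e => 1/3 * (q e b c * p a e * F a * G b * H c)) k i j l :=
          sum4_congr _ _ fun i j k l => by beta_reduce; ring
      _ = ∑ i, ∑ j, ∑ k, ∑ l, 1/3 * (q l j k * p i l * F i * G j * H k) := sum4_kijl _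
  have h17 : (∑ i, ∑ j, ∑ k, ∑ l, p i j * F i * q j k l * G k * H l) = C1 := by
    rw [hC1d]
    calc (∑ i, ∑ j, ∑ k, ∑ l, p i j * F i * q j k l * G k * H l)
        = ∑ i, ∑ j, ∑ k, ∑ l, (fun a b c e => q e b c * p a e * F a * G b * H c) i k l j :=
          sum4_congr _ _ fun i j k l => by beta_reduce; ring
      _ = ∑ i, ∑ j, ∑ k, ∑ l, q l j k * p i l * F i * G j * H k := sum4_iklj _
  have h5 : (∑ i, ∑ j, ∑ k, ∑ l, 1/3 * q l i j * p k l * F i * G k * H j) = 1/3 * C2 := by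
    rw [hC2d, mul_sum4]
    calc (∑ i, ∑ j, ∑ k, ∑ l, 1/3 * q l i j * p k l * F i * G k * H j)
        = ∑ i, ∑ j, ∑ k, ∑ l, (fun a b c e => 1/3 * (q e a c * p b e * F a * G b * H c)) i k j l :=
          sum4_congr _ _ fun i j k l => by beta_reduce; ring
      _ = ∑ i, ∑ j, ∑ k, ∑ l, 1/3 * (q l i k * p j l * F i * G j * H k) := sum4_ikjl _
  have h10 : (∑ i, ∑ j, ∑ k, ∑ l, p i j * q i k l * F k * G l * H j) = C3 := by
    rw [hC3d]
    calc (∑ i, ∑ j, ∑ k, ∑ l, p i j * q i k l * F k * G l * H j)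
        = ∑ i, ∑ j, ∑ k, ∑ l, (fun a b c e => q e a b * p e c * F a * G b * H c) k l j i :=
          sum4_congr _ _ fun i j k l => by beta_reduce; ring
      _ = ∑ i, ∑ j, ∑ k, ∑ l, q l i j * p l k * F i * G j * H k := sum4_klji _
  have h16 : (∑ i, ∑ j, ∑ k, ∑ l, 1/3 * q l i j * p k l * F i * G j * H k) = 1/3 * C4 := by
    rw [hC4d, mul_sum4]
    exact sum4_congr _ _ fun i j k l => by ring
  have hC2 : C2 + C2' = 0 := by
    rw [hC2d, hC2'd]
    simp only [← Finset.sum_add_distrib]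
    have : ∀ i j k l : Fin d, q l i k * p j l * F i * G j * H k + q l k i * p j l * F i * G j * H k = 0 :=
      fun i j k l => by rw [hq l i k]; ring
    simp only [this, Finset.sum_const_zero]
  have hC3 : C3 + C4 = 0 := by
    rw [hC3d, hC4d]
    simp only [← Finset.sum_add_distrib]
    have : ∀ i j k l : Fin d, q l i j * p l k * F i * G j * H k + q l i j * p k l * F i * G j * H k = 0 :=
      fun i j k l => by rw [hp l k]; ring
    simp only [this, Finset.sum_const_zero]
  have hJac : C1 + C2' + C4 = 0 := by
    rw [hC1d, hC2'd, hC4d]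
    simp only [← Finset.sum_add_distrib]
    have key : ∀ i j k : Fin d, (∑ l, (q l j k * p i l * F i * G j * H k
        + q l k i * p j l * F i * G j * H k + q l i j * p k l * F i * G j * H k)) = 0 := by
      intro i j k
      have h2 : (∑ l, (q l j k * p i l * F i * G j * H k + q l k i * p j l * F i * G j * H k
          + q l i j * p k l * F i * G j * H k))
          = (-(F i * G j * H k)) * ∑ l, (p l i * q l j k + p l j * q l k i + p l k * q l i j) := by
        rw [Finset.mul_sum]
        exact Finset.sum_congr rfl fun l _ => by rw [hp i l, hp j l, hp k l]; ring
      rw [h2, hJ j k i, mul_zero]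
    simp only [key, Finset.sum_const_zero]
  simp only [mul_add, add_mul, mul_sub, sub_mul, Finset.sum_add_distrib, Finset.sum_sub_distrib,
    Finset.mul_sum, Finset.sum_mul]
  simp only [one_div, mul_comm, mul_assoc, mul_left_comm, hK1, hK2] at h1 h4 h7 h8 h9 h13 h14 h18 h2 h3 h19 h5 h6 h10 h16 h17 ⊢
  linear_combination h1 + h4 + h7 - h8 - h9 - h13 - h14 - h18 + h2 + h3 - h19 + 2*h5 + h6
    + h10 + h16 - h17 + (2/3)*hC2 + hC3 - (2/3)*hJac

section Expand

variable {d : ℕ}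

lemma pd_B1 (P : (Fin d → ℝ) → Matrix (Fin d) (Fin d) ℝ)
    (hP : ∀ i j, ContDiff ℝ (⊤ : ℕ∞) fun x => P x i j)
    {f g : (Fin d → ℝ) → ℝ}
    (hf : ContDiff ℝ (⊤ : ℕ∞) f) (hg : ContDiff ℝ (⊤ : ℕ∞) g) (k : Fin d) (x : Fin d → ℝ) :
    pd k (fun y => ∑ i, ∑ j, P y i j * pd i f y * pd j g y) x
      = ∑ i, ∑ j, (pd k (fun y => P y i j) x * pd i f x * pd j g x
          + P x i j * pd k (pd i f) x * pd j g x + P x i j * pd i f x * pd k (pd j g) x) := by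
  have hsm : ∀ i j : Fin d, ContDiff ℝ (⊤ : ℕ∞) (fun y => P y i j * pd i f y * pd j g y) :=
    fun i j => ((hP i j).mul (contDiff_pd i hf)).mul (contDiff_pd j hg)
  rw [pd_sum Finset.univ (fun i => fun y => ∑ j, P y i j * pd i f y * pd j g y) k
      (fun i _ => ((ContDiff.sum (fun j _ => hsm i j)).differentiable (by simp)) x)]
  refine Finset.sum_congr rfl fun i _ => ?_
  rw [pd_sum Finset.univ (fun j => fun y => P y i j * pd i f y * pd j g y) k
      (fun j _ => (smooth_diff (hsm i j)) x)]
  refine Finset.sum_congr rfl fun j _ => ?_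
  exact pd_mul3 k (hP i j) (contDiff_pd i hf) (contDiff_pd j hg)

end Expand

/-- Associativity of the Kontsevich star-product modulo `ō(ħ²)`: if the smooth
skew-symmetric `P` satisfies the Jacobi identity, then the ħ²-coefficient of the
associator of `⋆ = B₀ + ħB₁ + ħ²B₂` vanishes for all smooth `f, g, h`. -/
theorem associator_order_two_vanishes_for_poisson {d : ℕ}
    (P : (Fin d → ℝ) → Matrix (Fin d) (Fin d) ℝ)
    (hP : ∀ i j, ContDiff ℝ (⊤ : ℕ∞) fun x => P x i j)
    (hskew : ∀ x i j, P x i j = - P x j i)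
    (hjacobi : ∀ (i j k : Fin d) (x : Fin d → ℝ),
      ∑ l, (P x l k * pd l (fun y => P y i j) x
        + P x l i * pd l (fun y => P y j k) x
        + P x l j * pd l (fun y => P y k i) x) = 0)
    (f g h : (Fin d → ℝ) → ℝ)
    (hf : ContDiff ℝ (⊤ : ℕ∞) f) (hg : ContDiff ℝ (⊤ : ℕ∞) g)
    (hh : ContDiff ℝ (⊤ : ℕ∞) h) (x : Fin d → ℝ) :
    B2 P (fun y => f y * g y) h x + B1 P (B1 P f g) h x + B2 P f g x * h x
      - B2 P f (fun y => g y * h y) x - B1 P f (B1 P g h) x - f x * B2 P g h x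
      = 0 := by
  have hfd := smooth_diff hf
  have hgd := smooth_diff hg
  have hhd := smooth_diff hh
  have hpdm_fg : ∀ i : Fin d, pd i (fun y => f y * g y) x
      = pd i f x * g x + f x * pd i g x := fun i => pd_mul i (hfd x) (hgd x)
  have hpdm_gh : ∀ i : Fin d, pd i (fun y => g y * h y) x
      = pd i g x * h x + g x * pd i h x := fun i => pd_mul i (hgd x) (hhd x)
  have hpdpdm_fg : ∀ k i : Fin d, pd k (pd i (fun y => f y * g y)) x
      = pd k (pd i f) x * g x + pd i f x * pd k g x + pd k f x * pd i g x
        + f x * pd k (pd i g) x := by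
    intro k i
    have hfun : pd i (fun y => f y * g y) = fun y => pd i f y * g y + f y * pd i g y :=
      funext fun y => pd_mul i (hfd y) (hgd y)
    rw [hfun, pd_add k ((smooth_diff ((contDiff_pd i hf).mul hg)) x)
        ((smooth_diff (hf.mul (contDiff_pd i hg))) x),
      pd_mul k ((smooth_diff (contDiff_pd i hf)) x) (hgd x),
      pd_mul k (hfd x) ((smooth_diff (contDiff_pd i hg)) x)]
    ring
  have hpdpdm_gh : ∀ k i : Fin d, pd k (pd i (fun y => g y * h y)) x
      = pd k (pd i g) x * h x + pd i g x * pd k h x + pd k g x * pd i h x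
        + g x * pd k (pd i h) x := by
    intro k i
    have hfun : pd i (fun y => g y * h y) = fun y => pd i g y * h y + g y * pd i h y :=
      funext fun y => pd_mul i (hgd y) (hhd y)
    rw [hfun, pd_add k ((smooth_diff ((contDiff_pd i hg).mul hh)) x)
        ((smooth_diff (hg.mul (contDiff_pd i hh))) x),
      pd_mul k ((smooth_diff (contDiff_pd i hg)) x) (hhd x),
      pd_mul k (hgd x) ((smooth_diff (contDiff_pd i hh)) x)]
    ring
  have hq' : ∀ l i j : Fin d, pd l (fun y => P y i j) x = - pd l (fun y => P y j i) x := by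
    intro l i j
    have hfun : (fun y => P y i j) = fun y => -(P y j i) := funext fun y => hskew y i j
    rw [hfun]
    show fderiv ℝ (fun y => -(P y j i)) x (Pi.single l 1) = -(fderiv ℝ (fun y => P y j i) x (Pi.single l 1))
    rw [fderiv_fun_neg]
    simp
  have hpdB1fg := fun k => pd_B1 P hP hf hg k x
  have hpdB1gh := fun k => pd_B1 P hP hg hh k x
  have hB1fg_eq : B1 P f g = fun y => ∑ i, ∑ j, P y i j * pd i f y * pd j g y := rfl
  have hB1gh_eq : B1 P g h = fun y => ∑ i, ∑ j, P y i j * pd i g y * pd j h y := rfl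
  simp only [B2, B1, hB1fg_eq, hB1gh_eq]
  simp only [hpdpdm_fg, hpdm_fg, hpdpdm_gh, hpdm_gh, hpdB1fg, hpdB1gh]
  exact core (fun i j => P x i j) (fun l i j => pd l (fun y => P y i j) x)
    (fun i => pd i f x) (fun i => pd i g x) (fun i => pd i h x)
    (fun a b => pd a (pd b f) x) (fun a b => pd a (pd b g) x) (fun a b => pd a (pd b h) x)
    (f x) (g x) (h x)
    (fun i j => hskew x i j) hq'
    (fun a b => pd_comm hf b a x) (fun a b => pd_comm hg b a x) (fun a b => pd_comm hh b a x)
    (fun i j k => hjacobi i j k x)
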